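/- arXiv:2601.07111 — 2 statements merged into one kernel-verified Lean document; each statement's English description precedes it below -/
import Mathlib

section
/- Reduction of twirled deviations to Pauli channels: Let n ≥ 1, let W be a finite type (the working register), and let D be a complex matrix on the tensor product space indexed by (Fin n → Fin 2) × W, written in the Pauli basis of the first factor as D = ∑_{f : Fin n → Fin 4} (P_f ⊗ M_f) for a family of W × W complex matrices M_f. Then for every 2^n × 2^n complex matrix ρ and every W × W complex matrix σ, (1/4^n) ∑_{h : Fin n → Fin 4} ((P_h)ᴴ ⊗ 1) · D · (P_h ⊗ 1) · (ρ ⊗ σ) · ((P_h)ᴴ ⊗ 1) · Dᴴ · (P_h ⊗ 1) = ∑_{f : Fin n → Fin 4} (P_f · ρ · (P_f)ᴴ) ⊗ (M_f · σ · (M_f)ᴴ). In words: sandwiching an arbitrary deviation between a uniformly random Pauli encryption and the matching decryption reduces it to a convex combination of Pauli deviations on the first register. -/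
open Matrix Finset

/-- The four single-qubit Pauli matrices: identity, X, Y, Z. -/
noncomputable def pauli : Fin 4 → Matrix (Fin 2) (Fin 2) ℂ
  | 0 => 1
  | 1 => !![0, 1; 1, 0]
  | 2 => !![0, -Complex.I; Complex.I, 0]
  | 3 => !![1, 0; 0, -1]

/-- The `n`-qubit Pauli string associated to `f : Fin n → Fin 4`. -/
noncomputable def PauliString (n : ℕ) (f : Fin n → Fin 4) :
    Matrix (Fin n → Fin 2) (Fin n → Fin 2) ℂ :=
  fun x y => ∏ i, pauli (f i) (x i) (y i)
open Kronecker

/-! Conjugating `P_f ⊗ A` by `P_h ⊗ 1` only multiplies it by a sign `ε(f, h) = ±1`,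
recording whether `P_f` and `P_h` commute. Hence the `h`-th term of the twirl is
`∑_{f,g} ε(f,h) ε(g,h) • (P_f ρ P_g) ⊗ (M_f σ M_gᴴ)`, and the characters `h ↦ ε(f, h)`
are orthogonal, `∑_h ε(f,h) ε(g,h) = 4^n δ_{fg}`, which kills the cross terms `f ≠ g`. -/

namespace Matrix

variable {ι m n p R : Type*} [Fintype ι]

def piKronecker [CommMonoid R] (A : ι → Matrix m n R) : Matrix (ι → m) (ι → n) R :=
  of fun x y => ∏ i, A i (x i) (y i)

lemma piKronecker_mul [CommSemiring R] [DecidableEq ι] [Fintype n] (A : ι → Matrix m n R)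
    (B : ι → Matrix n p R) : piKronecker A * piKronecker B = piKronecker fun i => A i * B i := by
  ext x z
  simp only [piKronecker, mul_apply, of_apply, Fintype.prod_sum, prod_mul_distrib]

lemma piKronecker_smul [CommMonoid R] (c : ι → R) (A : ι → Matrix m n R) :
    piKronecker (fun i => c i • A i) = (∏ i, c i) • piKronecker A := by
  ext x y
  simp [piKronecker, prod_mul_distrib]

lemma conjTranspose_piKronecker [CommMonoid R] [StarMul R] (A : ι → Matrix m n R) :
    (piKronecker A)ᴴ = piKronecker fun i => (A i)ᴴ := by
  ext x y
  simp [piKronecker, star_prod]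

end Matrix

def pauliSign (a b : Fin 4) : ℂ := if a = 0 ∨ b = 0 ∨ a = b then 1 else -1

lemma conjTranspose_pauli (a : Fin 4) : (pauli a)ᴴ = pauli a := by
  fin_cases a <;> ext i j <;> fin_cases i <;> fin_cases j <;> simp [pauli]

lemma pauli_mul_pauli_mul_pauli (a b : Fin 4) :
    pauli b * pauli a * pauli b = pauliSign a b • pauli a := by
  fin_cases a <;> fin_cases b <;> ext i j <;> fin_cases i <;> fin_cases j <;>
    simp [pauli, pauliSign, mul_apply, Fin.sum_univ_two]

lemma sum_pauliSign_mul_pauliSign (a b : Fin 4) :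
    ∑ c, pauliSign a c * pauliSign b c = if a = b then 4 else 0 := by
  fin_cases a <;> fin_cases b <;> simp [pauliSign, Fin.sum_univ_four] <;> norm_num

section PauliString

variable {n : ℕ}

lemma pauliString_eq_piKronecker (f : Fin n → Fin 4) :
    PauliString n f = piKronecker fun i => pauli (f i) :=
  rfl

lemma conjTranspose_pauliString (f : Fin n → Fin 4) :
    (PauliString n f)ᴴ = PauliString n f := by
  simp only [pauliString_eq_piKronecker, conjTranspose_piKronecker, conjTranspose_pauli]

def pauliStringSign (f h : Fin n → Fin 4) : ℂ := ∏ i, pauliSign (f i) (h i)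

lemma pauliString_mul_pauliString_mul_pauliString (f h : Fin n → Fin 4) :
    PauliString n h * PauliString n f * PauliString n h =
      pauliStringSign f h • PauliString n f := by
  simp only [pauliString_eq_piKronecker, piKronecker_mul, pauli_mul_pauli_mul_pauli,
    piKronecker_smul, pauliStringSign]

lemma sum_pauliStringSign_mul_pauliStringSign (f g : Fin n → Fin 4) :
    ∑ h, pauliStringSign f h * pauliStringSign g h = if f = g then 4 ^ n else 0 := by
  simp only [pauliStringSign, ← prod_mul_distrib]
  rw [← Fintype.prod_sum fun i c => pauliSign (f i) c * pauliSign (g i) c]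
  simp only [sum_pauliSign_mul_pauliSign]
  split_ifs with hfg
  · simp [hfg]
  · obtain ⟨i, hi⟩ := Function.ne_iff.mp hfg
    exact prod_eq_zero (mem_univ i) (if_neg hi)

lemma pauliString_conj_kronecker_sum {W V : Type*} [Fintype W] [DecidableEq W] [Fintype V]
    [DecidableEq V] (h : Fin n → Fin 4) (A : (Fin n → Fin 4) → Matrix W V ℂ) :
    ((PauliString n h)ᴴ ⊗ₖ (1 : Matrix W W ℂ)) * (∑ f, PauliString n f ⊗ₖ A f) *
        (PauliString n h ⊗ₖ (1 : Matrix V V ℂ)) =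
      ∑ f, pauliStringSign f h • (PauliString n f ⊗ₖ A f) := by
  simp only [Matrix.mul_sum, Matrix.sum_mul, ← mul_kronecker_mul, Matrix.one_mul, Matrix.mul_one,
    conjTranspose_pauliString, pauliString_mul_pauliString_mul_pauliString, smul_kronecker]

lemma conjTranspose_sum_pauliString_kronecker {W V : Type*}
    (A : (Fin n → Fin 4) → Matrix W V ℂ) :
    (∑ f, PauliString n f ⊗ₖ A f)ᴴ = ∑ f, PauliString n f ⊗ₖ (A f)ᴴ := by
  simp only [conjTranspose_sum, conjTranspose_kronecker, conjTranspose_pauliString]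

lemma pauliString_twirl_summand {W : Type*} [Fintype W] [DecidableEq W]
    (M : (Fin n → Fin 4) → Matrix W W ℂ) (h : Fin n → Fin 4)
    (ρ : Matrix (Fin n → Fin 2) (Fin n → Fin 2) ℂ) (σ : Matrix W W ℂ) :
    ((PauliString n h)ᴴ ⊗ₖ (1 : Matrix W W ℂ)) * (∑ f, PauliString n f ⊗ₖ M f) *
          (PauliString n h ⊗ₖ (1 : Matrix W W ℂ)) * (ρ ⊗ₖ σ) *
          ((PauliString n h)ᴴ ⊗ₖ (1 : Matrix W W ℂ)) * (∑ f, PauliString n f ⊗ₖ M f)ᴴ *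
          (PauliString n h ⊗ₖ (1 : Matrix W W ℂ)) =
      ∑ f, ∑ g, (pauliStringSign f h * pauliStringSign g h) •
        ((PauliString n f * ρ * PauliString n g) ⊗ₖ (M f * σ * (M g)ᴴ)) := by
  set K := fun A : Matrix _ _ ℂ => ((PauliString n h)ᴴ ⊗ₖ (1 : Matrix W W ℂ)) * A *
    (PauliString n h ⊗ₖ (1 : Matrix W W ℂ))
  calc _ = K (∑ f, PauliString n f ⊗ₖ M f) * (ρ ⊗ₖ σ) *
        K (∑ f, PauliString n f ⊗ₖ (M f)ᴴ) := by
        simp only [K, conjTranspose_sum_pauliString_kronecker, Matrix.mul_assoc]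
    _ = _ := by
        simp only [K, pauliString_conj_kronecker_sum, Matrix.sum_mul, Matrix.mul_sum,
          Matrix.smul_mul, Matrix.mul_smul, ← mul_kronecker_mul, smul_sum, smul_smul]
        rw [sum_comm]
        exact sum_congr rfl fun f _ => sum_congr rfl fun g _ => by rw [mul_comm]

lemma sum_pauliStringSign_mul_pauliStringSign_smul {E : Type*} [AddCommMonoid E] [Module ℂ E]
    (X : (Fin n → Fin 4) → (Fin n → Fin 4) → E) :
    ∑ h, ∑ f, ∑ g, (pauliStringSign f h * pauliStringSign g h) • X f g =
      (4 : ℂ) ^ n • ∑ f, X f f := by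
  calc _ = ∑ f, ∑ g, (∑ h, pauliStringSign f h * pauliStringSign g h) • X f g := by
        rw [sum_comm]
        refine sum_congr rfl fun f _ => ?_
        rw [sum_comm]
        simp only [sum_smul]
    _ = _ := by
        simp only [sum_pauliStringSign_mul_pauliStringSign, ite_smul, zero_smul, sum_ite_eq,
          mem_univ, if_true, smul_sum]

end PauliString

theorem twirled_deviation_reduction_general (n : ℕ)
    (W : Type) [Fintype W] [DecidableEq W]
    (D : Matrix ((Fin n → Fin 2) × W) ((Fin n → Fin 2) × W) ℂ)
    (M : (Fin n → Fin 4) → Matrix W W ℂ)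
    (hD : D = ∑ f : Fin n → Fin 4, PauliString n f ⊗ₖ M f)
    (ρ : Matrix (Fin n → Fin 2) (Fin n → Fin 2) ℂ) (σ : Matrix W W ℂ) :
    ((4 : ℂ) ^ n)⁻¹ • ∑ h : Fin n → Fin 4,
        ((PauliString n h)ᴴ ⊗ₖ (1 : Matrix W W ℂ)) * D *
          (PauliString n h ⊗ₖ (1 : Matrix W W ℂ)) * (ρ ⊗ₖ σ) *
          ((PauliString n h)ᴴ ⊗ₖ (1 : Matrix W W ℂ)) * Dᴴ *
          (PauliString n h ⊗ₖ (1 : Matrix W W ℂ))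
      = ∑ f : Fin n → Fin 4,
          (PauliString n f * ρ * (PauliString n f)ᴴ) ⊗ₖ (M f * σ * (M f)ᴴ) := by
  subst hD
  have h4 : (4 : ℂ) ^ n ≠ 0 := pow_ne_zero n (by norm_num)
  simp only [pauliString_twirl_summand, sum_pauliStringSign_mul_pauliStringSign_smul, smul_smul,
    inv_mul_cancel₀ h4, one_smul]
  simp only [conjTranspose_pauliString]

/-- **Reduction of twirled deviations to Pauli channels**: sandwiching an arbitrary
deviation `D = ∑_f P_f ⊗ M_f` between a uniformly random Pauli encryption of the
first register and the matching decryption reduces it to a convex combination of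
Pauli deviations on the first register. -/
theorem twirled_deviation_reduction (n : ℕ) (hn : 1 ≤ n)
    (W : Type) [Fintype W] [DecidableEq W]
    (D : Matrix ((Fin n → Fin 2) × W) ((Fin n → Fin 2) × W) ℂ)
    (M : (Fin n → Fin 4) → Matrix W W ℂ)
    (hD : D = ∑ f : Fin n → Fin 4, PauliString n f ⊗ₖ M f)
    (ρ : Matrix (Fin n → Fin 2) (Fin n → Fin 2) ℂ) (σ : Matrix W W ℂ) :
    ((4 : ℂ) ^ n)⁻¹ • ∑ h : Fin n → Fin 4,
        ((PauliString n h)ᴴ ⊗ₖ (1 : Matrix W W ℂ)) * D *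
          (PauliString n h ⊗ₖ (1 : Matrix W W ℂ)) * (ρ ⊗ₖ σ) *
          ((PauliString n h)ᴴ ⊗ₖ (1 : Matrix W W ℂ)) * Dᴴ *
          (PauliString n h ⊗ₖ (1 : Matrix W W ℂ))
      = ∑ f : Fin n → Fin 4,
          (PauliString n f * ρ * (PauliString n f)ᴴ) ⊗ₖ (M f * σ * (M f)ᴴ) :=
  twirled_deviation_reduction_general n W D M hD ρ σ
end

section
/- Hoeffding upper-tail bound for the hypergeometric distribution: Let N ≥ 1, K ≤ N, n ≤ N, and let X be distributed according to the hypergeometric distribution with population size N, K marked items, and n draws, so that E[X] = (K/N)·n. Then for every real χ ≥ 0 with (K/N) + χ ≤ 1, the probability that X ≥ ((K/N) + χ)·n is at most exp(−2·χ²·n). -/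
/-!
Chernoff's method. With `p = K / N`, the factorial moments of `X` are
`E[C(X, i)] = C(K, i) C(N - i, n - i) / C(N, n) = C(n, i) C(K, i) / C(N, i) ≤ C(n, i) pⁱ`,
those of `Bin(n, p)`. Expanding `(1 + t)^X` in them gives `E[(1 + t)^X] ≤ (1 + p t)ⁿ` for
`t ≥ 0`, so the moment generating function of `X` is dominated by the binomial one. Hoeffding's
lemma for a Bernoulli variable bounds `1 - p + p eˢ ≤ exp (p s + s² / 8)`, and Markov's
inequality for `e^{sX}` with `s = 4χ` gives `exp (-2χ² n)`.
-/

open Finset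

/-- The probability mass function of the hypergeometric distribution with
population size `N`, of which `K` are marked, and `n` draws without replacement:
`Pr[X = j] = (K choose j) · (N−K choose n−j) / (N choose n)`. -/
noncomputable def hypergeomPMF (N K n j : ℕ) : ℝ :=
  ((K.choose j : ℝ) * ((N - K).choose (n - j) : ℝ)) / (N.choose n : ℝ)

open Real

namespace Nat

theorem descFactorial_mul_pow_le_descFactorial_mul_pow {K N : ℕ} (hK : K ≤ N) (i : ℕ) :
    K.descFactorial i * N ^ i ≤ N.descFactorial i * K ^ i := by
  induction i with
  | zero => simp
  | succ i ih =>
    have step : (K - i) * N ≤ (N - i) * K := by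
      rcases le_or_gt i K with h | h
      · zify [h, h.trans hK]; nlinarith
      · simp [Nat.sub_eq_zero_of_le h.le]
    calc K.descFactorial (i + 1) * N ^ (i + 1)
        = ((K - i) * N) * (K.descFactorial i * N ^ i) := by
          rw [descFactorial_succ, pow_succ]; ring
      _ ≤ ((N - i) * K) * (N.descFactorial i * K ^ i) := Nat.mul_le_mul step ih
      _ = N.descFactorial (i + 1) * K ^ (i + 1) := by rw [descFactorial_succ, pow_succ]; ring

theorem choose_mul_pow_le_choose_mul_pow {K N : ℕ} (hK : K ≤ N) (i : ℕ) :
    K.choose i * N ^ i ≤ N.choose i * K ^ i := by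
  have h := descFactorial_mul_pow_le_descFactorial_mul_pow hK i
  rw [descFactorial_eq_factorial_mul_choose, descFactorial_eq_factorial_mul_choose,
    mul_assoc, mul_assoc] at h
  exact Nat.le_of_mul_le_mul_left h (factorial_pos i)

theorem cast_choose_le_choose_mul_div_pow {K N : ℕ} (hK : K ≤ N) (i : ℕ) :
    (K.choose i : ℝ) ≤ N.choose i * ((K : ℝ) / N) ^ i := by
  rcases N.eq_zero_or_pos with rfl | hN
  · obtain rfl : K = 0 := by omega
    cases i <;> simp
  rw [div_pow, ← mul_div_assoc, le_div_iff₀ (by positivity)]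
  exact_mod_cast choose_mul_pow_le_choose_mul_pow hK i

theorem sum_choose_mul_choose_sub_mul_choose {K N n i : ℕ} (hK : K ≤ N) (hi : i ≤ n) :
    ∑ j ∈ range (n + 1), K.choose j * (N - K).choose (n - j) * j.choose i
      = K.choose i * (N - i).choose (n - i) := by
  rcases lt_or_ge K i with hiK | hiK
  · rw [choose_eq_zero_of_lt hiK, zero_mul]
    refine sum_eq_zero fun j _ => ?_
    rcases lt_or_ge K j with hj | hj
    · rw [choose_eq_zero_of_lt hj, zero_mul, zero_mul]
    · rw [choose_eq_zero_of_lt (hj.trans_lt hiK), mul_zero]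
  have hvanish : ∀ j ∈ range (n + 1), j ∉ Ico i (n + 1) →
      K.choose j * (N - K).choose (n - j) * j.choose i = 0 := by
    intro j hj hji
    simp only [mem_range, mem_Ico, not_and, not_lt] at hj hji
    rw [choose_eq_zero_of_lt (n := j) (k := i) (by omega), mul_zero]
  rw [← sum_subset (fun j hj => by simp only [mem_Ico, mem_range] at hj ⊢; omega) hvanish,
    sum_Ico_eq_sum_range, show n + 1 - i = (n - i) + 1 by omega]
  have hterm : ∀ m ∈ range (n - i + 1),
      K.choose (i + m) * (N - K).choose (n - (i + m)) * (i + m).choose i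
        = K.choose i * ((K - i).choose m * (N - K).choose (n - i - m)) := by
    intro m _
    rw [mul_right_comm, choose_mul (le_add_right i m), Nat.add_sub_cancel_left,
      show n - (i + m) = n - i - m by omega, mul_assoc]
  rw [sum_congr rfl hterm, ← mul_sum, show N - i = K - i + (N - K) by omega, add_choose_eq,
    Nat.sum_antidiagonal_eq_sum_range_succ_mk]

end Nat

theorem hypergeomPMF_nonneg (N K n j : ℕ) : 0 ≤ hypergeomPMF N K n j := by
  unfold hypergeomPMF; positivity

theorem sum_hypergeomPMF_mul_choose_le {N K n i : ℕ} (hK : K ≤ N) (hi : i ≤ n) :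
    ∑ j ∈ range (n + 1), hypergeomPMF N K n j * j.choose i
      ≤ n.choose i * ((K : ℝ) / N) ^ i := by
  have hmoment : ∑ j ∈ range (n + 1), hypergeomPMF N K n j * j.choose i
      = K.choose i * (N - i).choose (n - i) / N.choose n := by
    simp only [hypergeomPMF, div_mul_eq_mul_div, ← sum_div]
    exact_mod_cast congrArg (fun m : ℕ => (m : ℝ) / N.choose n)
      (Nat.sum_choose_mul_choose_sub_mul_choose hK hi)
  rw [hmoment]
  refine div_le_of_le_mul₀ (by positivity) (by positivity) ?_
  calc (K.choose i : ℝ) * (N - i).choose (n - i)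
      ≤ N.choose i * ((K : ℝ) / N) ^ i * (N - i).choose (n - i) := by
        gcongr; exact Nat.cast_choose_le_choose_mul_div_pow hK i
    _ = n.choose i * ((K : ℝ) / N) ^ i * N.choose n := by
        rw [mul_right_comm, ← Nat.cast_mul, ← Nat.choose_mul hi, Nat.cast_mul]; ring

theorem one_add_pow_eq_sum_range_choose_mul_pow {R : Type*} [CommSemiring R] (x : R) {j n : ℕ}
    (hj : j ≤ n) : (1 + x) ^ j = ∑ i ∈ range (n + 1), (j.choose i : R) * x ^ i := by
  rw [add_comm, add_pow, ← sum_subset (range_subset_range.mpr (by omega : j + 1 ≤ n + 1))]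
  · exact sum_congr rfl fun i _ => by ring
  · intro i _ hi
    simp only [mem_range, not_lt] at hi
    rw [Nat.choose_eq_zero_of_lt (by omega), Nat.cast_zero, zero_mul]

theorem sum_hypergeomPMF_mul_one_add_pow_le {N K n : ℕ} (hK : K ≤ N) {t : ℝ} (ht : 0 ≤ t) :
    ∑ j ∈ range (n + 1), hypergeomPMF N K n j * (1 + t) ^ j ≤ (1 + (K : ℝ) / N * t) ^ n :=
  calc ∑ j ∈ range (n + 1), hypergeomPMF N K n j * (1 + t) ^ j
      = ∑ i ∈ range (n + 1),
          (∑ j ∈ range (n + 1), hypergeomPMF N K n j * j.choose i) * t ^ i := by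
        simp only [sum_mul, mul_assoc]
        rw [sum_comm]
        refine sum_congr rfl fun j hj => ?_
        rw [one_add_pow_eq_sum_range_choose_mul_pow t (mem_range_succ_iff.mp hj), mul_sum]
    _ ≤ ∑ i ∈ range (n + 1), n.choose i * ((K : ℝ) / N) ^ i * t ^ i := by
        gcongr with i hi
        exact sum_hypergeomPMF_mul_choose_le hK (mem_range_succ_iff.mp hi)
    _ = (1 + (K : ℝ) / N * t) ^ n := by
        rw [one_add_pow_eq_sum_range_choose_mul_pow (n := n) _ le_rfl]
        exact sum_congr rfl fun i _ => by ring

theorem sum_hypergeomPMF_mul_exp_le {N K n : ℕ} (hK : K ≤ N) {s : ℝ} (hs : 0 ≤ s) :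
    ∑ j ∈ range (n + 1), hypergeomPMF N K n j * exp (s * j)
      ≤ (1 - (K : ℝ) / N + (K : ℝ) / N * exp s) ^ n := by
  have h := sum_hypergeomPMF_mul_one_add_pow_le (n := n) hK (sub_nonneg.mpr (one_le_exp hs))
  rw [show 1 - (K : ℝ) / N + K / N * exp s = 1 + K / N * (exp s - 1) by ring]
  refine le_of_eq_of_le (sum_congr rfl fun j _ => ?_) h
  rw [add_sub_cancel, ← exp_nat_mul, mul_comm s]

open ProbabilityTheory MeasureTheory in
theorem one_sub_add_mul_exp_le_exp {p : ℝ} (hp₀ : 0 ≤ p) (hp₁ : p ≤ 1) (t : ℝ) :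
    1 - p + p * exp t ≤ exp (p * t + t ^ 2 / 8) := by
  have h := (hasSubgaussianMGF_of_mem_Icc (X := fun b : Bool => (b.toNat : ℝ))
    (μ := bernoulliMeasure true false ⟨p, hp₀, hp₁⟩) (a := 0) (b := 1)
    (measurable_of_finite _).aemeasurable (ae_of_all _ fun b => by cases b <;> simp)).mgf_le t
  simp only [mgf, integral_bernoulliMeasure, smul_eq_mul] at h
  norm_num at h
  have e1 : exp (p * t) * exp (t * (1 - p)) = exp t := by rw [← exp_add]; ring_nf
  have e2 : exp (p * t) * exp (-(t * p)) = 1 := by rw [← exp_add, ← exp_zero]; ring_nf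
  calc 1 - p + p * exp t
      = exp (p * t) * (p * exp (t * (1 - p)) + (1 - p) * exp (-(t * p))) := by
        linear_combination -p * e1 - (1 - p) * e2
    _ ≤ exp (p * t) * exp (t ^ 2 / 8) := by gcongr; exact h.trans_eq (by ring_nf)
    _ = exp (p * t + t ^ 2 / 8) := (exp_add _ _).symm

theorem sum_ite_le_exp_mul_sum_mul_exp {ι : Type*} {s : Finset ι} {f x : ι → ℝ}
    (hf : ∀ i ∈ s, 0 ≤ f i) (a : ℝ) {c : ℝ} (hc : 0 ≤ c) :
    ∑ i ∈ s, (if a ≤ x i then f i else 0)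
      ≤ exp (-(c * a)) * ∑ i ∈ s, f i * exp (c * x i) := by
  rw [mul_sum]
  refine sum_le_sum fun i hi => ?_
  split_ifs with h
  · rw [mul_left_comm, ← exp_add]
    exact le_mul_of_one_le_right (hf i hi) (one_le_exp (by nlinarith))
  · have := hf i hi; positivity

theorem hypergeometric_upper_tail_general (N K n : ℕ) (hK : K ≤ N)
    (χ : ℝ) (hχ : 0 ≤ χ) :
    (∑ j ∈ Finset.range (n + 1),
        if ((K : ℝ) / N + χ) * n ≤ (j : ℝ) then hypergeomPMF N K n j else 0)
      ≤ Real.exp (-2 * χ ^ 2 * n) := by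
  set p : ℝ := K / N
  have hp₀ : 0 ≤ p := by positivity
  have hp₁ : p ≤ 1 := div_le_one_of_le₀ (by exact_mod_cast hK) (Nat.cast_nonneg N)
  have hs : 0 ≤ 4 * χ := by positivity
  calc _ ≤ exp (-(4 * χ * ((p + χ) * n))) *
          ∑ j ∈ range (n + 1), hypergeomPMF N K n j * exp (4 * χ * j) :=
        sum_ite_le_exp_mul_sum_mul_exp (fun j _ => hypergeomPMF_nonneg N K n j) _ hs
    _ ≤ exp (-(4 * χ * ((p + χ) * n))) * (1 - p + p * exp (4 * χ)) ^ n := by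
        gcongr; exact sum_hypergeomPMF_mul_exp_le hK hs
    _ ≤ exp (-(4 * χ * ((p + χ) * n))) * exp (p * (4 * χ) + (4 * χ) ^ 2 / 8) ^ n := by
        gcongr
        exact one_sub_add_mul_exp_le_exp hp₀ hp₁ _
    _ = exp (-2 * χ ^ 2 * n) := by rw [← exp_nat_mul, ← exp_add]; ring_nf

/-- **Hoeffding upper-tail bound for the hypergeometric distribution**: if
`X ~ Hypergeometric(N, K, n)` (so `E[X] = (K/N)·n`) and `χ ≥ 0` with
`K/N + χ ≤ 1`, then `Pr[X ≥ ((K/N) + χ)·n] ≤ exp(−2χ²n)`. -/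
theorem hypergeometric_upper_tail (N K n : ℕ) (hN : 1 ≤ N) (hK : K ≤ N) (hn : n ≤ N)
    (χ : ℝ) (hχ : 0 ≤ χ) (hχ' : (K : ℝ) / N + χ ≤ 1) :
    (∑ j ∈ Finset.range (n + 1),
        if ((K : ℝ) / N + χ) * n ≤ (j : ℝ) then hypergeomPMF N K n j else 0)
      ≤ Real.exp (-2 * χ ^ 2 * n) :=
  hypergeometric_upper_tail_general N K n hK χ hχ
end
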